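/- Let G be a simple graph with no ds-completable card. Suppose there is a d-neighbourly vertex set j with |j| = d + 1, and let i be a vertex set disjoint from j. Then the number of edges between i and j is at least χ_{ij} + 1, where χ_{ij} = m_j − (n − 1 − n_i)·n_j with m_j the degree sum of j, n_j = |j|, n_i = |i|, and n = |V(G)|. -/

import Mathlib

open SimpleGraph Finset
open scoped Classical

variable {V : Type*}

/-- The degree of a vertex `u` in a simple graph `G`. -/
noncomputable def deg (G : SimpleGraph V) (u : V) : ℕ := (G.neighborSet u).ncard

/-- The degree of `u` in the card `G − v` (the vertex-deleted subgraph at `v`). -/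
noncomputable def cardDeg (G : SimpleGraph V) (v u : V) : ℕ := (G.neighborSet u \ {v}).ncard

/-- The card `G − v` is ds-completable: for each degree `d`, the vertices of degree `d`
in `G − v` are either all neighbours of `v` in `G` or all non-neighbours of `v` in `G`. -/
def DsCompletable (G : SimpleGraph V) (v : V) : Prop :=
  ∀ d : ℕ, (∀ u, u ≠ v → cardDeg G v u = d → G.Adj v u) ∨
           (∀ u, u ≠ v → cardDeg G v u = d → ¬ G.Adj v u)

/-- A vertex is bad if the graph contains a vertex of degree one less. -/
def Bad (G : SimpleGraph V) (v : V) : Prop := ∃ w, deg G w + 1 = deg G v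

/-- A vertex is dull if the graph contains a vertex of degree one more. -/
def Dull (G : SimpleGraph V) (v : V) : Prop := ∃ w, deg G w = deg G v + 1

/-- ε(s,t): the number of stubs on `s` used by edges from `s` to `t`
(for disjoint `s`, `t` this is the number of edges between them; for `s = t`
it is twice the number of edges inside `s`). -/
noncomputable def stubs (G : SimpleGraph V) (s t : Finset V) : ℕ :=
  ((s ×ˢ t).filter fun p => G.Adj p.1 p.2).card

/-- A vertex set is neighbourly if no vertex outside the set has a degree one less
than that of a vertex in the set. -/
def Neighbourly (G : SimpleGraph V) (K : Finset V) : Prop :=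
  ∀ u ∉ K, ∀ w ∈ K, deg G u + 1 ≠ deg G w

/-- A vertex set is `d`-neighbourly if it contains a vertex `v` of degree `d` such that
no vertex outside the set has a degree one less than that of any member other than `v`. -/
def DNeighbourly (G : SimpleGraph V) (d : ℕ) (K : Finset V) : Prop :=
  ∃ v ∈ K, deg G v = d ∧ ∀ u ∉ K, ∀ w ∈ K, w ≠ v → deg G u + 1 ≠ deg G w

/-!
Splitting the degree of each `w ∈ j` into its neighbours in `i` and those outside `i`, and
bounding the latter by `|V ∖ i| - 1`, gives `ε(i,j) ≥ χ_{ij}`. Equality forces every vertex of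
`j`, in particular the distinguished vertex `v`, to be adjacent to all of `V ∖ i` except itself.
As `deg v = |j| - 1`, the neighbourhood of `v` is then exactly `j ∖ {v}`. Deleting `v` lowers
precisely the degrees of `j ∖ {v}` by one, and `d`-neighbourliness says that no non-neighbour
of `v` has such a lowered degree, so the card `G - v` would be ds-completable.
-/

lemma deg_eq_degree [Fintype V] (G : SimpleGraph V) (u : V) : deg G u = G.degree u := by
  rw [deg, Set.ncard_eq_toFinset_card']
  rfl

lemma deg_eq_card_filter_adj [Fintype V] (G : SimpleGraph V) (u : V) :
    deg G u = #(univ.filter (G.Adj u)) := by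
  rw [deg_eq_degree, ← card_neighborFinset_eq_degree, neighborFinset_eq_filter]

lemma cardDeg_add_one_of_adj [Finite V] {G : SimpleGraph V} {v u : V} (h : G.Adj v u) :
    cardDeg G v u + 1 = deg G u :=
  Set.ncard_sdiff_singleton_add_one h.symm (Set.toFinite _)

lemma cardDeg_of_not_adj {G : SimpleGraph V} {v u : V} (h : ¬ G.Adj v u) :
    cardDeg G v u = deg G u := by
  rw [cardDeg, deg, Set.sdiff_singleton_eq_self fun h' => h h'.symm]

lemma dsCompletable_of_adj_iff [Finite V] {G : SimpleGraph V} {v : V} {K : Finset V}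
    (hadj : ∀ u, G.Adj v u ↔ u ∈ K ∧ u ≠ v)
    (hK : ∀ u ∉ K, ∀ w ∈ K, w ≠ v → deg G u + 1 ≠ deg G w) : DsCompletable G v := by
  intro d
  by_cases hd : ∃ w ∈ K, w ≠ v ∧ cardDeg G v w = d
  · left
    obtain ⟨w, hwK, hwv, rfl⟩ := hd
    intro u huv hdu
    by_contra hnadj
    have huK : u ∉ K := fun huK => hnadj ((hadj u).2 ⟨huK, huv⟩)
    refine hK u huK w hwK hwv ?_
    rw [← cardDeg_add_one_of_adj ((hadj w).2 ⟨hwK, hwv⟩), ← cardDeg_of_not_adj hnadj, hdu]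
  · right
    intro u huv hdu hvu
    exact hd ⟨u, ((hadj u).1 hvu).1, huv, hdu⟩

lemma filter_adj_subset_erase (G : SimpleGraph V) (s : Finset V) (w : V) :
    s.filter (G.Adj w) ⊆ s.erase w := fun u hu => by
  rw [mem_filter] at hu
  exact mem_erase.2 ⟨hu.2.ne', hu.1⟩

lemma card_filter_adj_le (G : SimpleGraph V) {s : Finset V} {w : V} (hw : w ∈ s) :
    #(s.filter (G.Adj w)) ≤ #s - 1 :=
  card_erase_of_mem hw ▸ card_le_card (filter_adj_subset_erase G s w)

lemma adj_of_card_filter_adj_eq {G : SimpleGraph V} {s : Finset V} {w : V} (hw : w ∈ s)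
    (h : #(s.filter (G.Adj w)) = #s - 1) {u : V} (hu : u ∈ s) (huw : u ≠ w) : G.Adj w u := by
  have hfilter : s.filter (G.Adj w) = s.erase w :=
    eq_of_subset_of_card_le (filter_adj_subset_erase G s w) (by rw [card_erase_of_mem hw, h])
  have : u ∈ s.filter (G.Adj w) := hfilter ▸ mem_erase.2 ⟨huw, hu⟩
  exact (mem_filter.1 this).2

lemma sum_deg_eq_stubs_add [Fintype V] (G : SimpleGraph V) (i j : Finset V) :
    ∑ w ∈ j, deg G w = stubs G i j + ∑ w ∈ j, #(iᶜ.filter (G.Adj w)) := by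
  have hstubs : stubs G i j = ∑ w ∈ j, #(i.filter (G.Adj w)) := by
    rw [stubs, card_filter, sum_product, sum_comm]
    simp only [card_filter, G.adj_comm]
  simp only [hstubs, deg_eq_card_filter_adj, ← sum_add_distrib, card_filter, sum_add_sum_compl]

lemma adj_of_sum_deg_ge [Fintype V] {G : SimpleGraph V} {i j : Finset V} (hij : Disjoint i j)
    (h : stubs G i j + (#iᶜ - 1) * #j ≤ ∑ w ∈ j, deg G w) {w u : V} (hw : w ∈ j) (hu : u ∉ i)
    (huw : u ≠ w) : G.Adj w u := by
  have hjc : ∀ w ∈ j, w ∈ iᶜ := fun w hw => mem_compl.2 (disjoint_right.1 hij hw)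
  have hle : ∀ w ∈ j, #(iᶜ.filter (G.Adj w)) ≤ #iᶜ - 1 := fun w hw =>
    card_filter_adj_le G (hjc w hw)
  have hsum : ∑ w ∈ j, #(iᶜ.filter (G.Adj w)) = ∑ _w ∈ j, (#iᶜ - 1) := by
    refine le_antisymm (sum_le_sum hle) ?_
    rw [sum_deg_eq_stubs_add G i] at h
    rw [sum_const, smul_eq_mul, mul_comm]
    omega
  exact adj_of_card_filter_adj_eq (hjc w hw) ((sum_eq_sum_iff_of_le hle).1 hsum w hw)
    (mem_compl.2 hu) huw

lemma adj_iff_of_deg_add_one_eq [Fintype V] {G : SimpleGraph V} {v : V} {K : Finset V}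
    (hv : v ∈ K) (hdeg : deg G v + 1 = #K) (hK : ∀ u ∈ K, u ≠ v → G.Adj v u) (u : V) :
    G.Adj v u ↔ u ∈ K ∧ u ≠ v := by
  have hN : K.erase v = univ.filter (G.Adj v) := by
    refine eq_of_subset_of_card_le (fun w hw => ?_) ?_
    · obtain ⟨hwv, hwK⟩ := mem_erase.1 hw
      exact mem_filter.2 ⟨mem_univ w, hK w hwK hwv⟩
    · rw [card_erase_of_mem hv, ← deg_eq_card_filter_adj]
      omega
  simpa [and_comm] using (Finset.ext_iff.1 hN u).symm

/-- In a graph with no ds-completable card, if `j` is a `d`-neighbourly set of size `d + 1`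
and `i` is disjoint from `j`, then `ε(i,j) ≥ χ_{ij} + 1`. -/
theorem stmt15 [Fintype V] (G : SimpleGraph V)
    (h : ∀ v : V, ¬ DsCompletable G v) (d : ℕ) (i j : Finset V)
    (hj : DNeighbourly G d j) (hcard : j.card = d + 1) (hd : Disjoint i j) :
    (∑ v ∈ j, deg G v : ℤ) - ((Fintype.card V : ℤ) - 1 - i.card) * j.card + 1 ≤
      (stubs G i j : ℤ) := by
  obtain ⟨v, hvj, hdegv, hnbr⟩ := hj
  have hvi : v ∉ i := disjoint_right.1 hd hvj
  by_contra! hlt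
  have hχ : (Fintype.card V : ℤ) - 1 - #i = ((#iᶜ - 1 : ℕ) : ℤ) := by
    have : 1 ≤ #iᶜ := card_pos.2 ⟨v, mem_compl.2 hvi⟩
    rw [Nat.cast_sub this, card_compl, Nat.cast_sub (card_le_univ i)]
    ring
  have hsum : stubs G i j + (#iᶜ - 1) * #j ≤ ∑ w ∈ j, deg G w := by
    rw [hχ] at hlt
    have : (stubs G i j : ℤ) + ((#iᶜ - 1 : ℕ) : ℤ) * #j ≤ ∑ w ∈ j, (deg G w : ℤ) := by linarith
    exact_mod_cast this
  have hNv := adj_iff_of_deg_add_one_eq hvj (by omega) fun u hu huv =>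
    adj_of_sum_deg_ge hd hsum hvj (disjoint_right.1 hd hu) huv
  exact h v (dsCompletable_of_adj_iff hNv hnbr)
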